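/- Let R ∈ H be a local ring with maximal ideal M such that M contains a non-zero-divisor of R. Then the following are equivalent: (1) R is a φ-pseudo-valuation ring; (2) (M : M) is a φ-chained overring of R whose maximal ideal is M; (3) R has a φ-chained overring V such that Spec(R) = Spec(V). -/

import Mathlib

/-- A subset `S` of a ring `A` is (the underlying set of) a prime ideal of the subring `B`. -/
def IsPrimeIdealSetOf {A : Type*} [CommRing A] (B : Subring A) (S : Set A) : Prop :=
  ∃ I : Ideal B, I.IsPrime ∧ Subtype.val '' (I : Set B) = S

/-- `Spec(R) = Spec(T)` for a subring `R` of `T`: a subset of `T` is a prime ideal of `T`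
iff it is a prime ideal of `R`. -/
def SpecEq {T : Type*} [CommRing T] (R : Subring T) : Prop :=
  ∀ S : Set T, (∃ J : Ideal T, J.IsPrime ∧ (J : Set T) = S) ↔ IsPrimeIdealSetOf R S
/-- `Spec` equality between two subrings of a common ring: a subset is a prime ideal of `R`
iff it is a prime ideal of `T`. -/
def SpecEqSub {A : Type*} [CommRing A] (R T : Subring A) : Prop :=
  ∀ S : Set A, IsPrimeIdealSetOf R S ↔ IsPrimeIdealSetOf T S
/-- An ideal `P` of `R` is divided if it is comparable with every ideal of `R`. -/
def Ideal.IsDivided {R : Type*} [CommRing R] (P : Ideal R) : Prop :=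
  ∀ I : Ideal R, I ≤ P ∨ P ≤ I

/-- `R ∈ H` : the nilradical of `R` is a divided prime ideal. -/
def MemH (R : Type*) [CommRing R] : Prop :=
  (nilradical R).IsPrime ∧ (nilradical R).IsDivided
/-- The localization `R_{Nil(R)}` of `R` at its nilradical, given that the nilradical
is prime. -/
abbrev LocAtNil (R : Type*) [CommRing R] (hp : (nilradical R).IsPrime) :=
  Localization (@Ideal.primeCompl R _ (nilradical R) hp)

/-- `φ(S)` : the image in `R_{Nil(R)}` of a subset `S ⊆ R` under the canonical map `r ↦ r/1`
(the restriction to `R` of the homomorphism `φ : T(R) → R_{Nil(R)}`). -/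
def phiImage (R : Type*) [CommRing R] (hp : (nilradical R).IsPrime) (S : Set R) :
    Set (LocAtNil R hp) :=
  algebraMap R (LocAtNil R hp) '' S

/-- An ideal `P` of `R` is φ-strongly prime: for `x, y ∈ R_{Nil(R)}`, `xy ∈ φ(P)` implies
`x ∈ φ(P)` or `y ∈ φ(P)`. -/
def PhiStronglyPrime {R : Type*} [CommRing R] (hp : (nilradical R).IsPrime) (P : Ideal R) :
    Prop :=
  ∀ x y : LocAtNil R hp, x * y ∈ phiImage R hp ↑P →
    x ∈ phiImage R hp ↑P ∨ y ∈ phiImage R hp ↑P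

/-- `R` is a φ-pseudo-valuation ring: `R ∈ H` and every prime ideal of `R` is
φ-strongly prime. -/
def PhiPVR (R : Type*) [CommRing R] : Prop :=
  ∃ h : MemH R, ∀ P : Ideal R, P.IsPrime → PhiStronglyPrime h.1 P
/-- `R` is a φ-chained ring: `R ∈ H` and every `x ∈ R_{Nil(R)} \ φ(R)` is invertible with
inverse `x⁻¹ ∈ φ(R)`. -/
def PhiChained (R : Type*) [CommRing R] : Prop :=
  ∃ h : MemH R, ∀ x : LocAtNil R h.1, x ∉ phiImage R h.1 Set.univ →
    ∃ y ∈ phiImage R h.1 Set.univ, x * y = 1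

/-!
Everything is computed in `L = R_{Nil(R)}`. Since `Nil(R)` is a divided prime, the nilpotents of
`T(R)` and of `L` all come from `Nil(R)`. Hence `ker φ` is nil, every non-nilpotent element of `L`
is a unit, an element whose `φ`-image lies in `φ(C)` for an ideal `C ⊇ Nil(R)` already lies in `C`,
and `L` is also the localization of every overring `V` at `Nil(V)`, so that φ-chainedness of `V`
can be read off in `L`.

(1 ⇒ 2) If `M` is φ-strongly prime, every `z ∈ L \ φ(M)` is a unit with `z⁻¹ φ(M) ⊆ φ(M)`.
Writing `z⁻¹ φ(x) = φ(m)` for a regular `x ∈ M` gives `z⁻¹ = φ(m / x)` with `m / x ∈ (M : M)`.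
So the elements of `(M : M)` outside `M` are units of `(M : M)`, which is therefore local with
maximal ideal `M`, and it is φ-chained.

(2 ⇒ 3) If `V ⊇ R` is local with maximal ideal `M`, every prime of `V` lies in `M ⊆ R`, and a
prime `P` of `R` is an ideal of `V`: for `v ∈ V` and `p ∈ P`, `m = v p ∈ M` satisfies
`m ^ 2 = p (v m) ∈ P`.

(3 ⇒ 1) A prime `P` of `R` is a prime of `V`. If `x y ∈ φ(P)` and `x ∉ φ(V)`, then
`x⁻¹ ∈ φ(V)` and `y ∈ φ(V P) = φ(P)`; if `x, y ∈ φ(V)`, use that `P` is prime in `V`.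
-/

theorem Ideal.IsDivided.exists_mem_eq_mul {R : Type*} [CommRing R] {P : Ideal R}
    (hd : P.IsDivided) [hP : P.IsPrime] {s a : R} (hs : s ∉ P) (ha : a ∈ P) :
    ∃ n ∈ P, a = s * n := by
  rcases hd (Ideal.span {s}) with h | h
  · exact absurd (h (Ideal.mem_span_singleton_self s)) hs
  · obtain ⟨n, rfl⟩ := Ideal.mem_span_singleton.mp (h ha)
    exact ⟨n, (hP.mem_or_mem ha).resolve_left hs, rfl⟩

theorem notMem_nilradical_of_mem_nonZeroDivisors {R : Type*} [CommRing R]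
    (hp : (nilradical R).IsPrime) {s : R} (hs : s ∈ nonZeroDivisors R) : s ∉ nilradical R := by
  rintro ⟨k, hk⟩
  have : Nontrivial R := ⟨⟨0, 1, fun h => hp.ne_top ((nilradical R).eq_top_of_isUnit_mem
    (zero_mem _) (h ▸ isUnit_one))⟩⟩
  exact zero_notMem_nonZeroDivisors (hk ▸ pow_mem hs k)

theorem nilradical_subring_eq_comap {A : Type*} [CommRing A] (V : Subring A) :
    nilradical V = (nilradical A).comap V.subtype := by
  ext v
  simp only [Ideal.mem_comap, mem_nilradical, Subring.coe_subtype]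
  exact (IsNilpotent.map_iff (f := V.subtype) Subtype.val_injective).symm

namespace MemH

section Localization

variable {R S : Type*} [CommRing R] [CommRing S] [Algebra R S] {M : Submonoid R}
  [IsLocalization M S] (hH : MemH R) (hM : ∀ s ∈ M, s ∉ nilradical R)
include hH hM

theorem exists_algebraMap_eq_of_isNilpotent {x : S} (hx : IsNilpotent x) :
    ∃ n ∈ nilradical R, algebraMap R S n = x := by
  have := hH.1
  obtain ⟨⟨a, s⟩, hxs⟩ := IsLocalization.surj M x
  have ha : a ∈ nilradical R := by
    obtain ⟨k, hk⟩ := hx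
    obtain ⟨m, hm⟩ := (IsLocalization.map_eq_zero_iff M S (a ^ k)).mp <| by
      rw [map_pow, ← hxs, mul_pow, hk, zero_mul]
    have hmak : (m : R) * a ^ k ∈ nilradical R := hm ▸ zero_mem _
    exact hH.1.mem_of_pow_mem k ((hH.1.mem_or_mem hmak).resolve_left (hM m m.2))
  obtain ⟨n, hn, rfl⟩ := hH.2.exists_mem_eq_mul (hM s s.2) ha
  refine ⟨n, hn, (IsLocalization.map_units S s).mul_left_cancel ?_⟩
  rw [← map_mul, ← hxs, mul_comm]

theorem nilradical_eq_map : nilradical S = (nilradical R).map (algebraMap R S) := by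
  refine le_antisymm (fun x hx => ?_) (Ideal.map_le_iff_le_comap.mpr fun n hn => ?_)
  · obtain ⟨n, hn, rfl⟩ := hH.exists_algebraMap_eq_of_isNilpotent hM hx
    exact Ideal.mem_map_of_mem _ hn
  · exact IsNilpotent.map hn _

theorem isPrime_nilradical_of_isLocalization : (nilradical S).IsPrime := by
  rw [hH.nilradical_eq_map hM]
  exact IsLocalization.isPrime_of_isPrime_disjoint M S _ hH.1 (Set.disjoint_left.mpr hM)

theorem of_range_le {V : Subring S} (hRV : (algebraMap R S).range ≤ V) : MemH V := by
  have := hH.isPrime_nilradical_of_isLocalization (S := S) hM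
  refine ⟨nilradical_subring_eq_comap V ▸ Ideal.comap_isPrime V.subtype _, fun I => ?_⟩
  refine or_iff_not_imp_left.mpr fun hI => ?_
  obtain ⟨v, hvI, hv⟩ := SetLike.not_le_iff_exists.mp hI
  intro η hη
  obtain ⟨n, hn, hηn⟩ :=
    hH.exists_algebraMap_eq_of_isNilpotent hM ((mem_nilradical.mp hη).map V.subtype)
  obtain ⟨⟨a, s⟩, hvs⟩ := IsLocalization.surj M (v : S)
  dsimp only at hvs
  have ha : a ∉ nilradical R := fun ha => hv <| by
    rw [nilradical_subring_eq_comap, Ideal.mem_comap, mem_nilradical, Subring.coe_subtype,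
      ← (IsLocalization.map_units S s).isNilpotent_mul_unit_of_commute_iff (Commute.all _ _), hvs]
    exact (mem_nilradical.mp ha).map _
  have := hH.1
  obtain ⟨b, -, rfl⟩ := hH.2.exists_mem_eq_mul ha hn
  have hη : η = v * ⟨algebraMap R S s * algebraMap R S b,
      V.mul_mem (hRV ⟨s, rfl⟩) (hRV ⟨b, rfl⟩)⟩ := by
    ext
    change (η : S) = v * (algebraMap R S s * algebraMap R S b)
    rw [← Subring.coe_subtype, ← hηn, map_mul, ← hvs, mul_assoc, Subring.coe_subtype]
  exact hη ▸ I.mul_mem_right _ hvI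

end Localization

end MemH

section Phi

variable {R : Type*} [CommRing R]

noncomputable def phi (hp : (nilradical R).IsPrime) : FractionRing R →+* LocAtNil R hp :=
  IsLocalization.lift fun s : nonZeroDivisors R => IsLocalization.map_units (LocAtNil R hp)
    (⟨s, notMem_nilradical_of_mem_nonZeroDivisors hp s.2⟩ : (nilradical R).primeCompl)

@[simp]
theorem phi_algebraMap (hp : (nilradical R).IsPrime) (r : R) :
    phi hp (algebraMap R (FractionRing R) r) = algebraMap R (LocAtNil R hp) r :=
  IsLocalization.lift_eq _ _

theorem phi_mem_phiImage (hp : (nilradical R).IsPrime) {P : Ideal R} {x : FractionRing R}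
    (hx : x ∈ algebraMap R (FractionRing R) '' P) : phi hp x ∈ phiImage R hp P := by
  obtain ⟨r, hr, rfl⟩ := hx
  exact ⟨r, hr, (phi_algebraMap hp r).symm⟩

theorem exists_mul_eq_zero_of_phi_eq_zero (hp : (nilradical R).IsPrime) {x : FractionRing R}
    (hx : phi hp x = 0) : ∃ t ∉ nilradical R, algebraMap R (FractionRing R) t * x = 0 := by
  obtain ⟨⟨a, s⟩, hxs⟩ := IsLocalization.surj (nonZeroDivisors R) x
  dsimp only at hxs
  have ha : algebraMap R (LocAtNil R hp) a = 0 := by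
    rw [← phi_algebraMap, ← hxs, map_mul, hx, zero_mul]
  obtain ⟨⟨t, ht⟩, hta⟩ :=
    (IsLocalization.map_eq_zero_iff (nilradical R).primeCompl _ a).mp ha
  refine ⟨t, ht, (IsLocalization.map_units (FractionRing R) s).mul_left_eq_zero.mp ?_⟩
  rw [mul_assoc, hxs, ← map_mul, hta, map_zero]

theorem isUnit_or_isNilpotent (hp : (nilradical R).IsPrime) (z : LocAtNil R hp) :
    IsUnit z ∨ IsNilpotent z := by
  refine or_iff_not_imp_left.mpr fun hz => ?_
  have hz : z ∈ IsLocalRing.maximalIdeal _ := hz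
  rw [← Localization.AtPrime.map_eq_maximalIdeal] at hz
  have hle : (nilradical R).map (algebraMap R (LocAtNil R hp)) ≤ nilradical _ :=
    Ideal.map_le_iff_le_comap.mpr fun n hn => (mem_nilradical.mp hn).map _
  exact mem_nilradical.mp (hle hz)

end Phi

namespace MemH

variable {R : Type*} [CommRing R] (hH : MemH R)
include hH

theorem isPrime_nilradical_fractionRing : (nilradical (FractionRing R)).IsPrime :=
  hH.isPrime_nilradical_of_isLocalization (M := nonZeroDivisors R)
    fun _ => notMem_nilradical_of_mem_nonZeroDivisors hH.1

theorem exists_algebraMap_eq_of_isNilpotent_fractionRing {x : FractionRing R}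
    (hx : IsNilpotent x) : ∃ n ∈ nilradical R, algebraMap R (FractionRing R) n = x :=
  hH.exists_algebraMap_eq_of_isNilpotent
    (fun _ => notMem_nilradical_of_mem_nonZeroDivisors hH.1) hx

theorem isNilpotent_of_phi_eq_zero {x : FractionRing R} (hx : phi hH.1 x = 0) :
    IsNilpotent x := by
  obtain ⟨t, ht, htx⟩ := exists_mul_eq_zero_of_phi_eq_zero hH.1 hx
  have hNil := hH.isPrime_nilradical_fractionRing
  refine (hNil.mem_or_mem (htx ▸ zero_mem _ : _ ∈ nilradical _)).resolve_left fun hnil => ht ?_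
  exact (IsNilpotent.map_iff (IsFractionRing.injective R (FractionRing R))).mp hnil

theorem isNilpotent_of_isNilpotent_phi {x : FractionRing R} (hx : IsNilpotent (phi hH.1 x)) :
    IsNilpotent x := by
  obtain ⟨k, hk⟩ := hx
  obtain ⟨m, hm⟩ := hH.isNilpotent_of_phi_eq_zero (x := x ^ k) (by rw [map_pow, hk])
  exact ⟨k * m, by rw [pow_mul, hm]⟩

theorem mem_image_of_phi_mem {C : Ideal R} (hC : nilradical R ≤ C) {x : FractionRing R}
    (hx : phi hH.1 x ∈ phiImage R hH.1 C) : x ∈ algebraMap R (FractionRing R) '' C := by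
  obtain ⟨c, hc, hcx⟩ := hx
  obtain ⟨n, hn, hnx⟩ := hH.exists_algebraMap_eq_of_isNilpotent_fractionRing
    (hH.isNilpotent_of_phi_eq_zero (x := x - algebraMap R _ c)
      (by rw [map_sub, phi_algebraMap, hcx, sub_self]))
  exact ⟨c + n, C.add_mem hc (hC hn), by rw [map_add, hnx, add_sub_cancel]⟩

theorem isUnit_of_notMem_phiImage {P : Ideal R} (hP : nilradical R ≤ P) {z : LocAtNil R hH.1}
    (hz : z ∉ phiImage R hH.1 P) : IsUnit z := by
  refine (isUnit_or_isNilpotent hH.1 z).resolve_right fun hnil => hz ?_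
  obtain ⟨n, hn, rfl⟩ := hH.exists_algebraMap_eq_of_isNilpotent
    (M := @Ideal.primeCompl _ _ (nilradical R) hH.1) (fun _ hs => hs) hnil
  exact ⟨n, hP hn, rfl⟩

end MemH

theorem codRestrict_notMem_nilradical {R : Type*} [CommRing R] {V : Subring (FractionRing R)}
    (hRV : (algebraMap R (FractionRing R)).range ≤ V) {t : R} (ht : t ∉ nilradical R) :
    (algebraMap R (FractionRing R)).codRestrict V (fun r => hRV ⟨r, rfl⟩) t ∉
      nilradical V := by
  rw [nilradical_subring_eq_comap, Ideal.mem_comap, mem_nilradical]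
  exact fun h => ht ((IsNilpotent.map_iff (IsFractionRing.injective R (FractionRing R))).mp h)

namespace MemH

variable {R : Type*} [CommRing R] (hH : MemH R) {V : Subring (FractionRing R)}
  (hRV : (algebraMap R (FractionRing R)).range ≤ V)
include hH hRV

theorem isLocalization_of_range_le (hV : (nilradical V).IsPrime) :
    letI : Algebra V (LocAtNil R hH.1) := ((phi hH.1).comp V.subtype).toAlgebra
    IsLocalization (@Ideal.primeCompl _ _ (nilradical V) hV) (LocAtNil R hH.1) := by
  let _ : Algebra V (LocAtNil R hH.1) := ((phi hH.1).comp V.subtype).toAlgebra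
  have := hH.1
  set ι := (algebraMap R (FractionRing R)).codRestrict V (fun r => hRV ⟨r, rfl⟩)
  have hι : ∀ r, algebraMap V (LocAtNil R hH.1) (ι r) = algebraMap R _ r := phi_algebraMap hH.1
  refine ⟨fun ⟨v, hv⟩ => ?_, fun z => ?_, fun {x y} hxy => ?_⟩
  · refine (isUnit_or_isNilpotent hH.1 _).resolve_right fun hnil => hv ?_
    rw [nilradical_subring_eq_comap]
    exact hH.isNilpotent_of_isNilpotent_phi hnil
  · obtain ⟨⟨r, s⟩, hzs⟩ := IsLocalization.surj (nilradical R).primeCompl z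
    refine ⟨⟨ι r, ⟨ι s, codRestrict_notMem_nilradical hRV s.2⟩⟩, ?_⟩
    simpa [hι] using hzs
  · obtain ⟨t, ht, htxy⟩ := exists_mul_eq_zero_of_phi_eq_zero hH.1 (x := x - y) <| by
      rw [map_sub, sub_eq_zero]; exact hxy
    refine ⟨⟨ι t, codRestrict_notMem_nilradical hRV ht⟩, Subtype.ext ?_⟩
    simpa [ι, mul_sub, sub_eq_zero] using htxy

theorem phiChained_iff (hV : MemH V) :
    PhiChained V ↔ ∀ z : LocAtNil R hH.1, z ∉ phi hH.1 '' V →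
      ∃ y ∈ phi hH.1 '' V, z * y = 1 := by
  let _ : Algebra V (LocAtNil R hH.1) := ((phi hH.1).comp V.subtype).toAlgebra
  have := hH.isLocalization_of_range_le hRV hV.1
  let e := IsLocalization.algEquiv (@Ideal.primeCompl _ _ (nilradical V) hV.1)
    (LocAtNil V hV.1) (LocAtNil R hH.1)
  have he : ∀ x, x ∈ phiImage V hV.1 Set.univ ↔ e x ∈ phi hH.1 '' V := fun x => by
    constructor
    · rintro ⟨v, -, rfl⟩
      exact ⟨v, v.2, (e.commutes v).symm⟩
    · rintro ⟨w, hw, hwx⟩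
      exact ⟨⟨w, hw⟩, trivial, e.injective ((e.commutes _).trans hwx)⟩
  constructor
  · rintro ⟨_, h⟩ z hz
    obtain ⟨y, hy, hzy⟩ := h (e.symm z) (by rwa [he, e.apply_symm_apply])
    exact ⟨e y, (he y).mp hy, by rw [← e.apply_symm_apply z, ← map_mul, hzy, map_one]⟩
  · refine fun h => ⟨hV, fun x hx => ?_⟩
    obtain ⟨y, hy, hxy⟩ := h (e x) (mt (he x).mpr hx)
    refine ⟨e.symm y, (he _).mpr (by rwa [e.apply_symm_apply]), e.injective ?_⟩
    rw [map_mul, e.apply_symm_apply, hxy, map_one]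

end MemH

/-- The paper's `(I : I)`, formed inside `A` through `algebraMap R A`. -/
def Ideal.selfColon {R : Type*} [CommRing R] (I : Ideal R) (A : Type*) [CommRing A]
    [Algebra R A] : Subring A where
  carrier := {x | ∀ m ∈ algebraMap R A '' I, x * m ∈ algebraMap R A '' I}
  one_mem' m hm := by rwa [one_mul]
  mul_mem' {x y} hx hy m hm := by rw [mul_assoc]; exact hx _ (hy m hm)
  zero_mem' _ _ := ⟨0, I.zero_mem, by rw [map_zero, zero_mul]⟩
  add_mem' {x y} hx hy m hm := by
    obtain ⟨a, ha, hxa⟩ := hx m hm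
    obtain ⟨b, hb, hyb⟩ := hy m hm
    exact ⟨a + b, I.add_mem ha hb, by rw [map_add, hxa, hyb, add_mul]⟩
  neg_mem' {x} hx m hm := by
    obtain ⟨a, ha, hxa⟩ := hx m hm
    exact ⟨-a, I.neg_mem ha, by rw [map_neg, hxa, neg_mul]⟩

namespace Ideal

variable {R : Type*} [CommRing R] (I : Ideal R) {A : Type*} [CommRing A] [Algebra R A]

theorem range_le_selfColon : (algebraMap R A).range ≤ I.selfColon A := by
  rintro _ ⟨r, rfl⟩ _ ⟨m, hm, rfl⟩
  exact ⟨r * m, I.mul_mem_left r hm, map_mul _ _ _⟩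

variable {I}

theorem notMem_of_isUnit_selfColon (hI : I ≠ ⊤) (hf : Function.Injective (algebraMap R A))
    {v : I.selfColon A} (hv : IsUnit v) : (v : A) ∉ algebraMap R A '' I := fun hvI => by
  obtain ⟨w, hvw⟩ := hv.exists_right_inv
  obtain ⟨m, hm, hmw⟩ := w.2 _ hvI
  rw [mul_comm, ← Subring.coe_mul, hvw, Subring.coe_one, ← map_one (algebraMap R A)] at hmw
  exact hI (I.eq_top_iff_one.mpr (hf hmw ▸ hm))

end Ideal

theorem PhiStronglyPrime.mul_mem_of_mul_eq_one {R : Type*} [CommRing R]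
    {hp : (nilradical R).IsPrime} {P : Ideal R} (hP : PhiStronglyPrime hp P)
    {z y : LocAtNil R hp} (hz : z ∉ phiImage R hp P) (hzy : z * y = 1) {m : R} (hm : m ∈ P) :
    y * algebraMap R _ m ∈ phiImage R hp P :=
  (hP z _ (by rw [← mul_assoc, hzy, one_mul]; exact ⟨m, hm, rfl⟩)).resolve_left hz

namespace MemH

variable {R : Type*} [CommRing R] (hH : MemH R)
include hH

theorem exists_mem_selfColon_phi_eq {I : Ideal R} (hI : nilradical R ≤ I)
    (hreg : ∃ x ∈ I, x ∈ nonZeroDivisors R) {z : LocAtNil R hH.1}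
    (hz : ∀ m ∈ I, z * algebraMap R _ m ∈ phiImage R hH.1 I) :
    ∃ w ∈ I.selfColon (FractionRing R), phi hH.1 w = z := by
  have := hH.1
  obtain ⟨x, hxI, hx⟩ := hreg
  obtain ⟨m, hmI, hmx⟩ := hz x hxI
  set w := IsLocalization.mk' (FractionRing R) m (⟨x, hx⟩ : nonZeroDivisors R)
  have hw : phi hH.1 w = z := by
    refine (IsLocalization.map_units (LocAtNil R hH.1)
      (⟨x, notMem_nilradical_of_mem_nonZeroDivisors hH.1 hx⟩ :
        (nilradical R).primeCompl)).mul_left_injective ?_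
    change phi hH.1 w * algebraMap R _ x = z * algebraMap R _ x
    rw [← hmx, ← phi_algebraMap, ← map_mul, IsLocalization.mk'_spec, phi_algebraMap]
  refine ⟨w, ?_, hw⟩
  rintro _ ⟨m', hm', rfl⟩
  exact hH.mem_image_of_phi_mem hI (by rw [map_mul, hw, phi_algebraMap]; exact hz m' hm')

variable {P : Ideal R} [P.IsPrime] (hP : PhiStronglyPrime hH.1 P)
  (hreg : ∃ x ∈ P, x ∈ nonZeroDivisors R)
include hP hreg

theorem exists_mem_selfColon_mul_phi_eq_one {z : LocAtNil R hH.1}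
    (hz : z ∉ phiImage R hH.1 P) :
    ∃ w ∈ P.selfColon (FractionRing R), z * phi hH.1 w = 1 := by
  obtain ⟨y, hzy⟩ := (hH.isUnit_of_notMem_phiImage (nilradical_le_prime P) hz).exists_right_inv
  obtain ⟨w, hw, rfl⟩ := hH.exists_mem_selfColon_phi_eq (nilradical_le_prime P) hreg
    fun m hm => hP.mul_mem_of_mul_eq_one hz hzy hm
  exact ⟨w, hw, hzy⟩

theorem isUnit_selfColon_iff (v : P.selfColon (FractionRing R)) :
    IsUnit v ↔ (v : FractionRing R) ∉ algebraMap R (FractionRing R) '' P := by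
  refine ⟨Ideal.notMem_of_isUnit_selfColon Ideal.IsPrime.ne_top'
    (IsFractionRing.injective R _), fun hv => ?_⟩
  obtain ⟨w, hw, hvw⟩ := hH.exists_mem_selfColon_mul_phi_eq_one hP hreg
    (mt (hH.mem_image_of_phi_mem (nilradical_le_prime P)) hv)
  have hnil : IsNilpotent (v * ⟨w, hw⟩ - 1) := by
    rw [← IsNilpotent.map_iff (f := Subring.subtype _) Subtype.val_injective]
    refine hH.isNilpotent_of_phi_eq_zero ?_
    simp [hvw]
  have hvw : IsUnit (v * ⟨w, hw⟩) := by simpa using hnil.isUnit_add_one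
  exact isUnit_of_mul_isUnit_left hvw

theorem isLocalRing_selfColon : IsLocalRing (P.selfColon (FractionRing R)) := by
  have hunit := hH.isUnit_selfColon_iff hP hreg
  have hzero : (0 : FractionRing R) ∈ algebraMap R (FractionRing R) '' P :=
    ⟨0, P.zero_mem, map_zero _⟩
  have : Nontrivial (P.selfColon (FractionRing R)) :=
    ⟨0, 1, fun h => (hunit 0).mp (h ▸ isUnit_one) hzero⟩
  refine .of_nonunits_add fun a b ha hb => ?_
  rw [mem_nonunits_iff, hunit, not_not] at ha hb ⊢
  obtain ⟨x, hx, hxa⟩ := ha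
  obtain ⟨y, hy, hyb⟩ := hb
  exact ⟨x + y, P.add_mem hx hy, by rw [map_add, hxa, hyb, Subring.coe_add]⟩

theorem image_maximalIdeal_selfColon :
    letI := hH.isLocalRing_selfColon hP hreg
    Subtype.val '' (IsLocalRing.maximalIdeal (P.selfColon (FractionRing R)) :
      Set (P.selfColon (FractionRing R))) =
      algebraMap R (FractionRing R) '' P := by
  let _ := hH.isLocalRing_selfColon hP hreg
  have hunit := hH.isUnit_selfColon_iff hP hreg
  ext x
  constructor
  · rintro ⟨v, hv, rfl⟩
    exact not_not.mp (mt (hunit v).mpr hv)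
  · rintro hx
    obtain ⟨m, -, rfl⟩ := id hx
    exact ⟨⟨_, P.range_le_selfColon ⟨m, rfl⟩⟩, fun hu => (hunit _).mp hu hx, rfl⟩

theorem phiChained_selfColon : PhiChained (P.selfColon (FractionRing R)) := by
  refine (hH.phiChained_iff P.range_le_selfColon (hH.of_range_le
    (fun _ => notMem_nilradical_of_mem_nonZeroDivisors hH.1) P.range_le_selfColon)).mpr
    fun z hz => ?_
  obtain ⟨w, hw, hzw⟩ := hH.exists_mem_selfColon_mul_phi_eq_one hP hreg (z := z) <| by
    rintro ⟨m, hm, rfl⟩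
    exact hz ⟨_, P.range_le_selfColon ⟨m, rfl⟩, phi_algebraMap _ m⟩
  exact ⟨phi hH.1 w, ⟨w, hw, rfl⟩, hzw⟩

end MemH

section SpecEq

variable {R A : Type*} [CommRing R] [CommRing A] {f : R →+* A} (hf : Function.Injective f)
include hf

theorem isPrimeIdealSetOf_range_iff (S : Set A) :
    IsPrimeIdealSetOf f.range S ↔ ∃ P : Ideal R, P.IsPrime ∧ f '' P = S := by
  constructor
  · rintro ⟨I, hI, rfl⟩
    refine ⟨I.comap f.rangeRestrict, Ideal.comap_isPrime _ _, ?_⟩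
    ext x
    constructor
    · rintro ⟨r, hr, rfl⟩
      exact ⟨f.rangeRestrict r, hr, rfl⟩
    · rintro ⟨⟨_, r, rfl⟩, hr, rfl⟩
      exact ⟨r, hr, rfl⟩
  · rintro ⟨P, hP, rfl⟩
    have hsurj := f.rangeRestrict_surjective
    refine ⟨P.map f.rangeRestrict, Ideal.map_isPrime_of_surjective hsurj ?_, ?_⟩
    · intro r hr
      have hr : f r = f 0 := (congrArg Subtype.val (RingHom.mem_ker.mp hr)).trans (map_zero f).symm
      exact hf hr ▸ P.zero_mem
    · ext x
      simp only [Set.mem_image, SetLike.mem_coe, Ideal.mem_map_iff_of_surjective _ hsurj]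
      constructor
      · rintro ⟨_, ⟨r, hr, rfl⟩, rfl⟩
        exact ⟨r, hr, rfl⟩
      · rintro ⟨r, hr, rfl⟩
        exact ⟨_, ⟨r, hr, rfl⟩, rfl⟩

end SpecEq

section LocalOverring

open IsLocalRing

variable {R A : Type*} [CommRing R] [CommRing A] [IsLocalRing R] {f : R →+* A}
  {V : Subring A} [IsLocalRing V]
  (hM : Subtype.val '' (maximalIdeal V : Set V) = f '' maximalIdeal R)
include hM

theorem mem_maximalIdeal_iff_of_image_eq (v : V) :
    v ∈ maximalIdeal V ↔ (v : A) ∈ f '' maximalIdeal R := by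
  rw [← hM, Subtype.val_injective.mem_set_image, SetLike.mem_coe]

variable (hRV : f.range ≤ V)
include hRV

theorem exists_isPrime_image_eq_val_image {Q : Ideal V} [Q.IsPrime] :
    ∃ P : Ideal R, P.IsPrime ∧ f '' P = Subtype.val '' (Q : Set V) := by
  let ι := f.codRestrict V fun r => hRV ⟨r, rfl⟩
  refine ⟨Q.comap ι, Ideal.comap_isPrime _ _, ?_⟩
  ext x
  constructor
  · rintro ⟨r, hr, rfl⟩
    exact ⟨ι r, hr, rfl⟩
  · rintro ⟨v, hv, rfl⟩
    obtain ⟨m, -, hmv⟩ := (mem_maximalIdeal_iff_of_image_eq hM v).mp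
      (le_maximalIdeal Ideal.IsPrime.ne_top' hv)
    exact ⟨m, show ι m ∈ Q from (Subtype.ext hmv : ι m = v) ▸ hv, hmv⟩

variable (hf : Function.Injective f)
include hf

theorem mul_mem_image_of_image_maximalIdeal_eq {P : Ideal R} [P.IsPrime] (c : V) {p : R}
    (hp : p ∈ P) : (c : A) * f p ∈ f '' P := by
  have hmax := mem_maximalIdeal_iff_of_image_eq hM
  have hfp : (⟨f p, hRV ⟨p, rfl⟩⟩ : V) ∈ maximalIdeal V :=
    (hmax _).mpr ⟨p, le_maximalIdeal Ideal.IsPrime.ne_top' hp, rfl⟩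
  obtain ⟨m, hm, hcm⟩ := (hmax _).mp ((maximalIdeal V).mul_mem_left c hfp)
  obtain ⟨m', -, hcm'⟩ := (hmax (c * ⟨f m, hRV ⟨m, rfl⟩⟩)).mp
    ((maximalIdeal V).mul_mem_left c ((hmax _).mpr ⟨m, hm, rfl⟩))
  have hsq : m * m = p * m' := hf <| by
    rw [map_mul, map_mul, hcm']
    simp only [Subring.coe_mul] at hcm ⊢
    rw [hcm]
    ring
  refine ⟨m, ?_, hcm⟩
  exact Ideal.IsPrime.mem_of_pow_mem ‹_› 2 (by rw [sq, hsq]; exact P.mul_mem_right _ hp)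

theorem exists_isPrime_val_image_eq_image {P : Ideal R} [P.IsPrime] :
    ∃ Q : Ideal V, Q.IsPrime ∧ Subtype.val '' (Q : Set V) = f '' P := by
  have hmax := mem_maximalIdeal_iff_of_image_eq hM
  let Q : Ideal V :=
    { carrier := {v | (v : A) ∈ f '' P}
      add_mem' := by
        rintro _ _ ⟨a, ha, hax⟩ ⟨b, hb, hby⟩
        exact ⟨a + b, P.add_mem ha hb, by rw [map_add, hax, hby, Subring.coe_add]⟩
      zero_mem' := ⟨0, P.zero_mem, map_zero f⟩
      smul_mem' := by
        rintro c v ⟨p, hp, hpv⟩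
        rw [smul_eq_mul, Set.mem_ofPred_eq, Subring.coe_mul, ← hpv]
        exact mul_mem_image_of_image_maximalIdeal_eq hM hRV hf c hp }
  refine ⟨Q, ⟨fun htop => ?_, fun {x y} hxy => ?_⟩, ?_⟩
  · obtain ⟨p, hp, hp1⟩ : (1 : A) ∈ f '' P := (htop ▸ Submodule.mem_top : (1 : V) ∈ Q)
    exact Ideal.IsPrime.ne_top' (P.eq_top_iff_one.mpr (hf (hp1.trans (map_one f).symm) ▸ hp))
  · by_cases hx : IsUnit x
    · exact Or.inr ((Q.unit_mul_mem_iff_mem hx).mp hxy)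
    by_cases hy : IsUnit y
    · exact Or.inl ((Q.mul_unit_mem_iff_mem hy).mp hxy)
    obtain ⟨a, -, hax⟩ := (hmax x).mp ((mem_maximalIdeal x).mpr hx)
    obtain ⟨b, -, hby⟩ := (hmax y).mp ((mem_maximalIdeal y).mpr hy)
    obtain ⟨p, hp, hpxy⟩ := hxy
    have hpab : p = a * b := hf (by rw [hpxy, map_mul, hax, hby, Subring.coe_mul])
    have hab : a * b ∈ P := hpab ▸ hp
    exact (‹P.IsPrime›.mem_or_mem hab).imp (⟨a, ·, hax⟩) (⟨b, ·, hby⟩)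
  · ext x
    constructor
    · rintro ⟨v, hv, rfl⟩
      exact hv
    · rintro ⟨p, hp, rfl⟩
      exact ⟨⟨f p, hRV ⟨p, rfl⟩⟩, ⟨p, hp, rfl⟩, rfl⟩

theorem specEqSub_range_of_image_maximalIdeal_eq : SpecEqSub f.range V := by
  intro S
  rw [isPrimeIdealSetOf_range_iff hf]
  constructor
  · rintro ⟨P, hP, rfl⟩
    exact exists_isPrime_val_image_eq_image hM hRV hf
  · rintro ⟨Q, hQ, rfl⟩
    exact exists_isPrime_image_eq_val_image hM hRV

end LocalOverring

namespace MemH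

variable {R : Type*} [CommRing R] (hH : MemH R) {V : Subring (FractionRing R)}
include hH

theorem phiStronglyPrime_of_val_image_eq
    (hV : ∀ z : LocAtNil R hH.1, z ∉ phi hH.1 '' V → ∃ y ∈ phi hH.1 '' V, z * y = 1)
    {P : Ideal R} [P.IsPrime] {Q : Ideal V} [Q.IsPrime]
    (hQP : Subtype.val '' (Q : Set V) = algebraMap R (FractionRing R) '' P) :
    PhiStronglyPrime hH.1 P := by
  have hPQ : ∀ v : V, v ∈ Q ↔ (v : FractionRing R) ∈ algebraMap R (FractionRing R) '' P :=
    fun v => by rw [← hQP, Subtype.val_injective.mem_set_image, SetLike.mem_coe]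
  have key : ∀ a b, a ∉ phi hH.1 '' V →
      a * b ∈ phiImage R hH.1 P → b ∈ phiImage R hH.1 P := by
    rintro a b ha ⟨p, hp, hpab⟩
    obtain ⟨_, ⟨v, hv, rfl⟩, hav⟩ := hV a ha
    obtain ⟨q, hq, hqp⟩ : algebraMap R (FractionRing R) p ∈ Subtype.val '' (Q : Set V) :=
      hQP ▸ ⟨p, hp, rfl⟩
    have hvq := phi_mem_phiImage hH.1 ((hPQ _).mp (Q.mul_mem_left ⟨v, hv⟩ hq))
    rwa [Subring.coe_mul, hqp, map_mul, phi_algebraMap, hpab, ← mul_assoc, mul_comm _ a, hav,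
      one_mul] at hvq
  intro x y hxy
  by_cases hx : x ∈ phi hH.1 '' V
  · by_cases hy : y ∈ phi hH.1 '' V
    · obtain ⟨a, ha, rfl⟩ := hx
      obtain ⟨b, hb, rfl⟩ := hy
      have hab := hH.mem_image_of_phi_mem (nilradical_le_prime P) (x := a * b) (by rwa [map_mul])
      rcases ‹Q.IsPrime›.mem_or_mem (x := ⟨a, ha⟩) (y := ⟨b, hb⟩) ((hPQ _).mpr hab) with
        h | h
      · exact Or.inl (phi_mem_phiImage hH.1 ((hPQ _).mp h))
      · exact Or.inr (phi_mem_phiImage hH.1 ((hPQ _).mp h))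
    · exact Or.inl (key y x hy (mul_comm x y ▸ hxy))
  · exact Or.inr (key x y hx hxy)

theorem phiPVR_of_phiChained (hRV : (algebraMap R (FractionRing R)).range ≤ V)
    (hV : PhiChained V) (hspec : SpecEqSub (algebraMap R (FractionRing R)).range V) :
    PhiPVR R := by
  obtain ⟨hVH, -⟩ := id hV
  refine ⟨hH, fun P hP => ?_⟩
  obtain ⟨Q, hQ, hQP⟩ := (hspec _).mp
    ((isPrimeIdealSetOf_range_iff (IsFractionRing.injective R _) _).mpr ⟨P, hP, rfl⟩)
  exact hH.phiStronglyPrime_of_val_image_eq ((hH.phiChained_iff hRV hVH).mp hV) hQP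

end MemH

open IsLocalRing in
/-- Let `R ∈ H` be a local ring whose maximal ideal `M` contains a
non-zero-divisor.  TFAE: (1) `R` is a φ-PVR; (2) `(M : M)` is a φ-chained overring of `R`
whose maximal ideal is `M`; (3) `R` has a φ-chained overring `V` with
`Spec(R) = Spec(V)`. -/
theorem stmt6 {R : Type*} [CommRing R] [IsLocalRing R] (hH : MemH R)
    (hreg : ∃ x ∈ maximalIdeal R, x ∈ nonZeroDivisors R) :
    List.TFAE [
      PhiPVR R,
      ∃ V : Subring (FractionRing R),
        (V : Set (FractionRing R)) =
          {x | ∀ m ∈ algebraMap R (FractionRing R) '' (maximalIdeal R : Set R),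
            x * m ∈ algebraMap R (FractionRing R) '' (maximalIdeal R : Set R)} ∧
        (algebraMap R (FractionRing R)).range ≤ V ∧ PhiChained ↥V ∧
        ∃ N : Ideal ↥V, N.IsMaximal ∧ (∀ N' : Ideal ↥V, N'.IsMaximal → N' = N) ∧
          Subtype.val '' (N : Set ↥V) =
            algebraMap R (FractionRing R) '' (maximalIdeal R : Set R),
      ∃ V : Subring (FractionRing R), (algebraMap R (FractionRing R)).range ≤ V ∧
        PhiChained ↥V ∧ SpecEqSub (algebraMap R (FractionRing R)).range V] := by
  tfae_have 1 → 2 := by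
    rintro ⟨_, hsp⟩
    have hM := hsp _ (maximalIdeal.isMaximal R).isPrime
    let _ := hH.isLocalRing_selfColon hM hreg
    exact ⟨_, rfl, Ideal.range_le_selfColon _, hH.phiChained_selfColon hM hreg, _,
      maximalIdeal.isMaximal _, fun _ hN => eq_maximalIdeal hN,
      hH.image_maximalIdeal_selfColon hM hreg⟩
  tfae_have 2 → 3 := by
    rintro ⟨V, -, hRV, hV, N, hN, hNuniq, hNM⟩
    have _ : IsLocalRing V := .of_unique_max_ideal ⟨N, hN, hNuniq⟩
    rw [eq_maximalIdeal hN] at hNM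
    exact ⟨V, hRV, hV, specEqSub_range_of_image_maximalIdeal_eq hNM hRV
      (IsFractionRing.injective R _)⟩
  tfae_have 3 → 1 := fun ⟨V, hRV, hV, hspec⟩ => hH.phiPVR_of_phiChained hRV hV hspec
  tfae_finish
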